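/- In the real/complex cone setup, the following characterizations hold: (a) 𝒞_ℂ = {h ∈ B_ℂ ∖ {0} : Re(ℓ(h)·conj(m(h))) ≥ 0 for all ℓ, m ∈ 𝒞'_ℝ}; (b) 𝒞'_ℂ = {ℓ ∈ B'_ℂ : Re(ℓ(x)·conj(ℓ(y))) > 0 for all x, y ∈ 𝒞_ℝ}; (c) 𝒞'_ℂ ⊇ Ĉ'_ℂ := {±ℓ ± ip : ℓ, p ∈ 𝒞̊'_ℝ}, where 𝒞̊'_ℝ = {ℓ ∈ 𝒞'_ℝ : ℓ(x) > 0 for all x ∈ 𝒞_ℝ}. -/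

import Mathlib

open Complex Set ENNReal

namespace ConeSetup

variable {B : Type*} [NormedAddCommGroup B] [NormedSpace ℝ B]

/-- Complex scalar multiplication on the complexification `B × B`:
`(a+ib)(x,y) = (ax − by, ay + bx)`. -/
def cSmul (z : ℂ) (p : B × B) : B × B :=
  (z.re • p.1 - z.im • p.2, z.re • p.2 + z.im • p.1)

/-- The "real" norm `‖(x,y)‖_r = √(‖x‖² + ‖y‖²)` on the complexification. -/
noncomputable def rNorm (p : B × B) : ℝ :=
  Real.sqrt (‖p.1‖ ^ 2 + ‖p.2‖ ^ 2)

/-- The complexification norm `‖(x,y)‖ = sup_{θ∈[0,2π]} ‖e^{iθ}(x,y)‖_r`. -/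
noncomputable def cNorm (p : B × B) : ℝ :=
  sSup ((fun θ : ℝ => rNorm (cSmul (Complex.exp (θ * Complex.I)) p)) ''
    Set.Icc 0 (2 * Real.pi))

/-- The real cone `𝒞_ℝ = {h ≠ 0 : ℓ(h) ≥ 0 for all ℓ ∈ S}`. -/
def realCone (S : Set (B →L[ℝ] ℝ)) : Set B :=
  {h | h ≠ 0 ∧ ∀ ℓ ∈ S, 0 ≤ ℓ h}

/-- The complex cone `𝒞_ℂ = ℂ_* ⋅ (𝒞_ℝ + i 𝒞_ℝ)`. -/
def complexCone (S : Set (B →L[ℝ] ℝ)) : Set (B × B) :=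
  {p | ∃ z : ℂ, z ≠ 0 ∧ ∃ x ∈ realCone S, ∃ y ∈ realCone S, p = cSmul z (x, y)}

/-- A map `B × B → ℂ` is a (continuous) complex-linear functional for the complex
structure `cSmul`. -/
def IsCLinearFunctional (ℓ : B × B → ℂ) : Prop :=
  (∀ p q : B × B, ℓ (p + q) = ℓ p + ℓ q) ∧
  (∀ (z : ℂ) (p : B × B), ℓ (cSmul z p) = z * ℓ p) ∧
  Continuous ℓ

/-- The dual real cone `𝒞'_ℝ = {ℓ ∈ B'_ℝ : ℓ(h) ≥ 0 for all h ∈ 𝒞_ℝ}`. -/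
def dualRealCone (S : Set (B →L[ℝ] ℝ)) : Set (B →L[ℝ] ℝ) :=
  {ℓ | ∀ h ∈ realCone S, 0 ≤ ℓ h}

/-- The dual complex cone `𝒞'_ℂ = {ℓ ∈ B'_ℂ : ℓ(h) ≠ 0 for all h ∈ 𝒞_ℂ}`. -/
def dualComplexCone (S : Set (B →L[ℝ] ℝ)) : Set (B × B → ℂ) :=
  {ℓ | IsCLinearFunctional ℓ ∧ ∀ h ∈ complexCone S, ℓ h ≠ 0}

/-- The action of a real functional on the complexification: `ℓ(x+iy) = ℓ(x) + iℓ(y)`. -/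
noncomputable def cext (ℓ : B →L[ℝ] ℝ) (p : B × B) : ℂ :=
  (ℓ p.1 : ℂ) + (ℓ p.2 : ℂ) * Complex.I

/-- `𝒞̊'_ℝ = {ℓ ∈ 𝒞'_ℝ : ℓ(x) > 0 for all x ∈ 𝒞_ℝ}`. -/
def interiorDualRealCone (S : Set (B →L[ℝ] ℝ)) : Set (B →L[ℝ] ℝ) :=
  {ℓ | ℓ ∈ dualRealCone S ∧ ∀ x ∈ realCone S, 0 < ℓ x}

/-- `Ĉ'_ℂ = {±ℓ ± ip : ℓ, p ∈ 𝒞̊'_ℝ}`. -/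
def hatDualComplexCone (S : Set (B →L[ℝ] ℝ)) : Set (B × B → ℂ) :=
  {q | ∃ ℓ ∈ interiorDualRealCone S, ∃ p ∈ interiorDualRealCone S,
    ∃ ε₁ ∈ ({1, -1} : Set ℝ), ∃ ε₂ ∈ ({1, -1} : Set ℝ),
      q = fun v => (ε₁ : ℂ) * cext ℓ v + (ε₂ : ℂ) * Complex.I * cext p v}

/-- `E_𝒞(h,g) = {ℓ(h)/ℓ(g) : ℓ ∈ 𝒞'_ℂ}`. -/
def gaugeSet (S : Set (B →L[ℝ] ℝ)) (h g : B × B) : Set ℂ :=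
  {z | ∃ ℓ ∈ dualComplexCone S, z = ℓ h / ℓ g}

/-- The projective gauge
`δ_𝒞(h,g) = ln( sup_{z∈E_𝒞(h,g)} |z| / inf_{z∈E_𝒞(h,g)} |z| ) = sup_{z,w∈E_𝒞(h,g)} ln|z/w|`,
valued in `[0,∞]`. -/
noncomputable def deltaGauge (S : Set (B →L[ℝ] ℝ)) (h g : B × B) : ℝ≥0∞ :=
  ⨆ z ∈ gaugeSet S h g, ⨆ w ∈ gaugeSet S h g, ENNReal.ofReal (Real.log (‖z‖ / ‖w‖))

/-- The real/complex cone setup: a separating family `S` of functionals, an order unit `𝕖`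
whose cone norm is the norm of `B`, and a functional `𝕞` in the weak-* closed convex hull
of `ℝ₊ ⋅ S` dominating the norm on the cone. -/
structure Setup (B : Type*) [NormedAddCommGroup B] [NormedSpace ℝ B] where
  S : Set (B →L[ℝ] ℝ)
  e : B
  mm : B →L[ℝ] ℝ
  κ : ℝ
  separating : ∀ x : B, (∀ ℓ ∈ S, ℓ x = 0) → x = 0
  e_mem : e ∈ realCone S
  arch : ∀ h : B, ∃ l : ℝ, 0 ≤ l ∧ ∀ ℓ ∈ S, 0 ≤ ℓ (l • e - h)
  norm_eq : ∀ h : B,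
    ‖h‖ = sInf {l : ℝ | 0 ≤ l ∧ ∀ ℓ ∈ S, 0 ≤ ℓ (l • e - h) ∧ 0 ≤ ℓ (l • e + h)}
  κ_pos : 0 < κ
  κ_lt_one : κ < 1
  mm_e : mm e = 1
  mm_lower : ∀ h ∈ realCone S, κ * ‖h‖ ≤ mm h
  mm_star : (⇑mm : B → ℝ) ∈ closure ((fun ℓ : B →L[ℝ] ℝ => (⇑ℓ : B → ℝ)) ''
    convexHull ℝ {q : B →L[ℝ] ℝ | ∃ c : ℝ, 0 ≤ c ∧ ∃ ℓ ∈ S, q = c • ℓ})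

/-!
(a) A nonzero `h` lies in `𝒞_ℂ` exactly when some rotation `z h` has real and imaginary parts
in the closed real cone. The numbers `ℓ(h)`, `ℓ ∈ 𝒞'_ℝ`, pairwise make an angle of at most `π/2`,
so one rotation moves all of them into the closed first quadrant, and `S ⊆ 𝒞'_ℝ` turns this
into the real cone condition for `z h`.

(b) If `Re(ℓ(x) conj ℓ(y)) ≤ 0`, then `-ℓ(x)/ℓ(y)` lies in the closed right half plane, so there
are `a, b` in the closed first quadrant with `a ℓ(x) + b ℓ(y) = 0`; then `a x + b y ∈ 𝒞_ℂ` is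
annihilated by `ℓ`. Conversely, `ℓ(x + iy) = 0` forces `ℓ(x) conj ℓ(y) = -i |ℓ(y)|²`.

(c) follows from (b): `Re((±ℓ(x) ± i p(x)) conj(±ℓ(y) ± i p(y))) = ℓ(x)ℓ(y) + p(x)p(y)`.
-/

open ComplexConjugate
open scoped Real

def firstQuadrant : Set ℂ := {z | 0 ≤ z.re ∧ 0 ≤ z.im}

lemma re_mul_mul_conj_mul (z u v : ℂ) :
    (z * u * conj (z * v)).re = normSq z * (u * conj v).re := by
  rw [map_mul, show z * u * (conj z * conj v) = z * conj z * (u * conj v) by ring, mul_conj,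
    re_ofReal_mul]

lemma re_mul_conj_eq_norm_mul_norm_mul_cos {u v : ℂ} (hu : u ≠ 0) (hv : v ≠ 0) :
    (u * conj v).re = ‖u‖ * ‖v‖ * Real.cos (u.arg - v.arg) := by
  rw [Real.cos_sub, cos_arg hu, cos_arg hv, sin_arg, sin_arg]
  field_simp
  simp [mul_re]

lemma arg_sub_arg_le_pi_div_two {u v : ℂ} (hu : u ≠ 0) (hv : v ≠ 0) (hu' : 0 ≤ u.re)
    (hv' : 0 ≤ v.re) (h : 0 ≤ (u * conj v).re) : u.arg - v.arg ≤ π / 2 := by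
  rw [re_mul_conj_eq_norm_mul_norm_mul_cos hu hv] at h
  have hcos := nonneg_of_mul_nonneg_right h (by positivity)
  obtain ⟨hu₁, hu₂⟩ := abs_le.1 (abs_arg_le_pi_div_two_iff.2 hu')
  obtain ⟨hv₁, hv₂⟩ := abs_le.1 (abs_arg_le_pi_div_two_iff.2 hv')
  by_contra! hlt
  exact (Real.cos_neg_of_pi_div_two_lt_of_lt hlt (by linarith)).not_ge hcos

lemma exists_subset_Icc_of_sub_le {A : Set ℝ} {d : ℝ} (h : ∀ s ∈ A, ∀ t ∈ A, s - t ≤ d) :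
    ∃ m, A ⊆ Icc m (m + d) := by
  rcases A.eq_empty_or_nonempty with rfl | ⟨t₀, ht₀⟩
  · exact ⟨0, empty_subset _⟩
  have hbdd : BddBelow A := ⟨t₀ - d, fun s hs => by linarith [h t₀ ht₀ s hs]⟩
  refine ⟨sInf A, fun t ht => ⟨csInf_le hbdd ht, ?_⟩⟩
  have : t - d ≤ sInf A := le_csInf ⟨t₀, ht₀⟩ fun s hs => by linarith [h t ht s hs]
  linarith

lemma exp_neg_mul_I_mul_mem_firstQuadrant {u : ℂ} {m : ℝ} (h : u.arg ∈ Icc m (m + π / 2)) :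
    exp (-(m * I)) * u ∈ firstQuadrant := by
  have hrot : exp (-(m * I)) * u = ‖u‖ * exp ((u.arg - m : ℝ) * I) := by
    conv_lhs => rw [← norm_mul_exp_arg_mul_I u]
    rw [mul_left_comm, ← exp_add]
    push_cast
    ring_nf
  rw [hrot, firstQuadrant, mem_ofPred, re_ofReal_mul, im_ofReal_mul, exp_ofReal_mul_I_re,
    exp_ofReal_mul_I_im]
  obtain ⟨h₁, h₂⟩ := h
  exact ⟨mul_nonneg (norm_nonneg _)
      (Real.cos_nonneg_of_mem_Icc ⟨by linarith [Real.pi_pos], by linarith⟩),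
    mul_nonneg (norm_nonneg _)
      (Real.sin_nonneg_of_nonneg_of_le_pi (by linarith) (by linarith [Real.pi_pos]))⟩

lemma exists_rotation_mem_firstQuadrant_of_re_nonneg {T : Set ℂ} (hre : ∀ u ∈ T, 0 ≤ u.re)
    (hpair : ∀ u ∈ T, ∀ v ∈ T, 0 ≤ (u * conj v).re) :
    ∃ z ≠ 0, ∀ u ∈ T, z * u ∈ firstQuadrant := by
  obtain ⟨m, hm⟩ := exists_subset_Icc_of_sub_le (A := arg '' (T \ {0})) (d := π / 2) <| by
    rintro _ ⟨u, ⟨hu, hu₀⟩, rfl⟩ _ ⟨v, ⟨hv, hv₀⟩, rfl⟩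
    exact arg_sub_arg_le_pi_div_two hu₀ hv₀ (hre u hu) (hre v hv) (hpair u hu v hv)
  refine ⟨exp (-(m * I)), exp_ne_zero _, fun u hu => ?_⟩
  rcases eq_or_ne u 0 with rfl | hu₀
  · simp [firstQuadrant]
  · exact exp_neg_mul_I_mul_mem_firstQuadrant (hm ⟨u, ⟨hu, hu₀⟩, rfl⟩)

lemma exists_rotation_mem_firstQuadrant {T : Set ℂ}
    (hpair : ∀ u ∈ T, ∀ v ∈ T, 0 ≤ (u * conj v).re) :
    ∃ z ≠ 0, ∀ u ∈ T, z * u ∈ firstQuadrant := by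
  by_cases hT : ∃ u₀ ∈ T, u₀ ≠ 0
  swap
  · push Not at hT
    exact ⟨1, one_ne_zero, fun u hu => by simp [hT u hu, firstQuadrant]⟩
  obtain ⟨u₀, hu₀, hu₀_ne⟩ := hT
  -- multiplying by `conj u₀` moves `T` into the closed right half plane
  obtain ⟨z, hz, hzT⟩ :=
    exists_rotation_mem_firstQuadrant_of_re_nonneg (T := (conj u₀ * ·) '' T)
      (by
        rintro _ ⟨u, hu, rfl⟩
        simpa [mul_comm] using hpair u hu u₀ hu₀)
      (by
        rintro _ ⟨u, hu, rfl⟩ _ ⟨v, hv, rfl⟩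
        rw [re_mul_mul_conj_mul]
        exact mul_nonneg (normSq_nonneg _) (hpair u hu v hv))
  refine ⟨z * conj u₀, mul_ne_zero hz ((map_ne_zero _).2 hu₀_ne), fun u hu => ?_⟩
  rw [mul_assoc]
  exact hzT _ ⟨u, hu, rfl⟩

lemma exists_mem_firstQuadrant_add_pos {u : ℂ} (hu : 0 ≤ u.re) :
    ∃ a ∈ firstQuadrant, a * u ∈ firstQuadrant ∧
      0 < a.re + (a * u).re ∧ 0 < a.im + (a * u).im := by
  rcases lt_trichotomy u.im 0 with him | him | him
  · exact ⟨I, by simp [firstQuadrant], by simp [firstQuadrant, hu, him.le], by simp [him],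
      by simp [add_pos_of_pos_of_nonneg, hu]⟩
  · exact ⟨1 + I, by simp [firstQuadrant], by simp [firstQuadrant, him, hu],
      by simp [him, add_pos_of_pos_of_nonneg, hu], by simp [him, add_pos_of_pos_of_nonneg, hu]⟩
  · exact ⟨1, by simp [firstQuadrant], by simp [firstQuadrant, hu, him.le],
      by simp [add_pos_of_pos_of_nonneg, hu], by simp [him]⟩

lemma exists_mem_firstQuadrant_mul_add_mul_eq_zero {v w : ℂ} (hw : w ≠ 0)
    (h : (v * conj w).re ≤ 0) :
    ∃ a ∈ firstQuadrant, ∃ b ∈ firstQuadrant, a * v + b * w = 0 ∧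
      0 < a.re + b.re ∧ 0 < a.im + b.im := by
  have hre : (-(v / w)).re = -(v * conj w).re / normSq w := by
    simp only [neg_re, div_re, mul_re, conj_re, conj_im]
    ring
  obtain ⟨a, ha, hau, hre, him⟩ := exists_mem_firstQuadrant_add_pos
    (hre ▸ div_nonneg (neg_nonneg.2 h) (normSq_nonneg w))
  refine ⟨a, ha, a * -(v / w), hau, ?_, hre, him⟩
  field_simp
  ring

variable {S : Set (B →L[ℝ] ℝ)}

lemma cSmul_one (p : B × B) : cSmul 1 p = p := by
  simp [cSmul]

lemma cSmul_mul (z w : ℂ) (p : B × B) : cSmul z (cSmul w p) = cSmul (z * w) p := by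
  ext <;> simp only [cSmul, mul_re, mul_im, smul_sub, smul_add, smul_smul, sub_smul, add_smul]
    <;> abel

lemma cSmul_ne_zero {z : ℂ} (hz : z ≠ 0) {p : B × B} (hp : p ≠ 0) : cSmul z p ≠ 0 := by
  intro h
  have := congrArg (cSmul z⁻¹) h
  rw [cSmul_mul, inv_mul_cancel₀ hz, cSmul_one] at this
  exact hp (this.trans (by simp [cSmul]))

lemma cext_cSmul (ℓ : B →L[ℝ] ℝ) (z : ℂ) (p : B × B) :
    cext ℓ (cSmul z p) = z * cext ℓ p := by
  apply Complex.ext <;> simp [cext, cSmul, mul_re, mul_im]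

lemma re_cext_mul_conj_cext (ℓ m : B →L[ℝ] ℝ) (p : B × B) :
    (cext ℓ p * conj (cext m p)).re = ℓ p.1 * m p.1 + ℓ p.2 * m p.2 := by
  simp [cext, mul_re]

lemma smul_add_smul_mem_realCone (hsep : ∀ x : B, (∀ ℓ ∈ S, ℓ x = 0) → x = 0)
    {x y : B} (hx : x ∈ realCone S) (hy : y ∈ realCone S) {α β : ℝ}
    (hα : 0 ≤ α) (hβ : 0 ≤ β) (hαβ : 0 < α + β) :
    α • x + β • y ∈ realCone S := by
  have hnonneg : ∀ ℓ ∈ S, 0 ≤ α * ℓ x ∧ 0 ≤ β * ℓ y := fun ℓ hℓ =>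
    ⟨mul_nonneg hα (hx.2 ℓ hℓ), mul_nonneg hβ (hy.2 ℓ hℓ)⟩
  refine ⟨fun h0 => ?_, fun ℓ hℓ => ?_⟩
  · -- a sum of two elements of the positive cone vanishes only if both do
    have hsum : ∀ ℓ ∈ S, α * ℓ x + β * ℓ y = 0 := fun ℓ hℓ => by
      simpa using congrArg ℓ h0
    have hαx : α • x = 0 := hsep _ fun ℓ hℓ => by
      simp only [map_smul, smul_eq_mul]
      linarith [hsum ℓ hℓ, hnonneg ℓ hℓ]
    have hβy : β • y = 0 := hsep _ fun ℓ hℓ => by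
      simp only [map_smul, smul_eq_mul]
      linarith [hsum ℓ hℓ, hnonneg ℓ hℓ]
    rcases smul_eq_zero.1 hαx with hα₀ | hx₀ <;> rcases smul_eq_zero.1 hβy with hβ₀ | hy₀
    exacts [by linarith, hy.1 hy₀, hx.1 hx₀, hx.1 hx₀]
  · simpa using add_nonneg (hnonneg ℓ hℓ).1 (hnonneg ℓ hℓ).2

lemma cSmul_mem_complexCone {z : ℂ} (hz : z ≠ 0) {p : B × B} (hp : p ∈ complexCone S) :
    cSmul z p ∈ complexCone S := by
  obtain ⟨w, hw, x, hx, y, hy, rfl⟩ := hp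
  exact ⟨z * w, mul_ne_zero hz hw, x, hx, y, hy, cSmul_mul z w _⟩

lemma mk_mem_complexCone {x y : B} (hx : x ∈ realCone S) (hy : y ∈ realCone S) :
    (x, y) ∈ complexCone S :=
  ⟨1, one_ne_zero, x, hx, y, hy, (cSmul_one _).symm⟩

lemma mk_zero_mem_complexCone {x : B} (hx : x ∈ realCone S) : (x, 0) ∈ complexCone S :=
  ⟨⟨1 / 2, -1 / 2⟩, by simp [Complex.ext_iff], x, hx, x, hx,
    by ext <;> simp only [cSmul] <;> module⟩

lemma zero_mk_mem_complexCone {y : B} (hy : y ∈ realCone S) : (0, y) ∈ complexCone S := by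
  simpa [cSmul] using cSmul_mem_complexCone I_ne_zero (mk_zero_mem_complexCone hy)

lemma ne_zero_of_mem_complexCone {p : B × B} (hp : p ∈ complexCone S) : p ≠ 0 := by
  obtain ⟨z, hz, x, hx, y, -, rfl⟩ := hp
  exact cSmul_ne_zero hz fun h => hx.1 (Prod.mk_eq_zero.1 h).1

lemma mem_complexCone_of_nonneg {p : B × B} (hp : p ≠ 0)
    (hnonneg : ∀ ℓ ∈ S, 0 ≤ ℓ p.1 ∧ 0 ≤ ℓ p.2) : p ∈ complexCone S := by
  obtain ⟨x, y⟩ := p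
  have hx : x ≠ 0 → x ∈ realCone S := fun h => ⟨h, fun ℓ hℓ => (hnonneg ℓ hℓ).1⟩
  have hy : y ≠ 0 → y ∈ realCone S := fun h => ⟨h, fun ℓ hℓ => (hnonneg ℓ hℓ).2⟩
  rcases eq_or_ne x 0 with rfl | hx₀
  · exact zero_mk_mem_complexCone (hy fun h => hp (by rw [h]; rfl))
  rcases eq_or_ne y 0 with rfl | hy₀
  · exact mk_zero_mem_complexCone (hx hx₀)
  · exact mk_mem_complexCone (hx hx₀) (hy hy₀)

lemma re_cext_mul_conj_cext_nonneg {p : B × B} (hp : p ∈ complexCone S) {ℓ m : B →L[ℝ] ℝ}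
    (hℓ : ℓ ∈ dualRealCone S) (hm : m ∈ dualRealCone S) :
    0 ≤ (cext ℓ p * conj (cext m p)).re := by
  obtain ⟨z, -, x, hx, y, hy, rfl⟩ := hp
  rw [cext_cSmul, cext_cSmul, re_mul_mul_conj_mul, re_cext_mul_conj_cext]
  have := hℓ x hx
  have := hℓ y hy
  have := hm x hx
  have := hm y hy
  exact mul_nonneg (normSq_nonneg z) (by positivity)

lemma mem_complexCone_of_re_cext_mul_conj_cext_nonneg {p : B × B} (hp : p ≠ 0)
    (H : ∀ ℓ ∈ dualRealCone S, ∀ m ∈ dualRealCone S, 0 ≤ (cext ℓ p * conj (cext m p)).re) :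
    p ∈ complexCone S := by
  obtain ⟨z, hz, hzT⟩ := exists_rotation_mem_firstQuadrant
    (T := (cext · p) '' dualRealCone S) <| by
      rintro _ ⟨ℓ, hℓ, rfl⟩ _ ⟨m, hm, rfl⟩
      exact H ℓ hℓ m hm
  have hq : cSmul z p ∈ complexCone S := by
    refine mem_complexCone_of_nonneg (cSmul_ne_zero hz hp) fun ℓ hℓ => ?_
    have := hzT _ ⟨ℓ, fun h hh => hh.2 ℓ hℓ, rfl⟩
    rw [← cext_cSmul] at this
    simpa [cext, firstQuadrant] using this
  simpa [cSmul_mul, inv_mul_cancel₀ hz, cSmul_one] using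
    cSmul_mem_complexCone (inv_ne_zero hz) hq

theorem complexCone_eq :
    complexCone S =
      {p : B × B | p ≠ 0 ∧ ∀ ℓ ∈ dualRealCone S, ∀ m ∈ dualRealCone S,
        0 ≤ (cext ℓ p * conj (cext m p)).re} :=
  Set.ext fun _ => ⟨fun hp => ⟨ne_zero_of_mem_complexCone hp,
      fun _ hℓ _ hm => re_cext_mul_conj_cext_nonneg hp hℓ hm⟩,
    fun hp => mem_complexCone_of_re_cext_mul_conj_cext_nonneg hp.1 hp.2⟩

lemma IsCLinearFunctional.map_mk {ℓ : B × B → ℂ} (hℓ : IsCLinearFunctional ℓ) (x y : B) :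
    ℓ (x, y) = ℓ (x, 0) + I * ℓ (y, 0) := by
  rw [← hℓ.2.1, ← hℓ.1]
  congr 1
  ext <;> simp [cSmul]

lemma IsCLinearFunctional.map_re_smul_add_re_smul {ℓ : B × B → ℂ} (hℓ : IsCLinearFunctional ℓ)
    (a b : ℂ) (x y : B) :
    ℓ (a.re • x + b.re • y, a.im • x + b.im • y) = a * ℓ (x, 0) + b * ℓ (y, 0) := by
  rw [← hℓ.2.1, ← hℓ.2.1, ← hℓ.1]
  congr 1
  ext <;> simp [cSmul]

lemma isCLinearFunctional_mul_cext_add_mul_cext (a b : ℂ) (ℓ p : B →L[ℝ] ℝ) :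
    IsCLinearFunctional fun v => a * cext ℓ v + b * cext p v :=
  ⟨fun _ _ => by
      simp only [cext, Prod.fst_add, Prod.snd_add, map_add, Complex.ofReal_add]
      ring,
    fun _ _ => by simp only [cext_cSmul]; ring,
    by unfold cext; fun_prop⟩

lemma re_mul_conj_pos_of_mem_dualComplexCone (hsep : ∀ x : B, (∀ ℓ ∈ S, ℓ x = 0) → x = 0)
    {ℓ : B × B → ℂ} (hℓ : ℓ ∈ dualComplexCone S) {x y : B} (hx : x ∈ realCone S)
    (hy : y ∈ realCone S) : 0 < (ℓ (x, 0) * conj (ℓ (y, 0))).re := by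
  by_contra! hle
  obtain ⟨a, ha, b, hb, hab, hre, him⟩ :=
    exists_mem_firstQuadrant_mul_add_mul_eq_zero (hℓ.2 _ (mk_zero_mem_complexCone hy)) hle
  refine hℓ.2 _ (mk_mem_complexCone (smul_add_smul_mem_realCone hsep hx hy ha.1 hb.1 hre)
    (smul_add_smul_mem_realCone hsep hx hy ha.2 hb.2 him)) ?_
  rw [hℓ.1.map_re_smul_add_re_smul, hab]

lemma mem_dualComplexCone_of_re_mul_conj_pos {ℓ : B × B → ℂ} (hlin : IsCLinearFunctional ℓ)
    (hpos : ∀ x ∈ realCone S, ∀ y ∈ realCone S, 0 < (ℓ (x, 0) * conj (ℓ (y, 0))).re) :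
    ℓ ∈ dualComplexCone S := by
  refine ⟨hlin, ?_⟩
  rintro _ ⟨z, hz, x, hx, y, hy, rfl⟩
  rw [hlin.2.1, hlin.map_mk]
  refine mul_ne_zero hz fun h₀ => (hpos x hx y hy).ne' ?_
  rw [eq_neg_of_add_eq_zero_left h₀, neg_mul, mul_assoc, mul_conj]
  simp

theorem dualComplexCone_eq (hsep : ∀ x : B, (∀ ℓ ∈ S, ℓ x = 0) → x = 0) :
    dualComplexCone S =
      {ℓ : B × B → ℂ | IsCLinearFunctional ℓ ∧
        ∀ x ∈ realCone S, ∀ y ∈ realCone S, 0 < (ℓ (x, 0) * conj (ℓ (y, 0))).re} :=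
  Set.ext fun _ =>
    ⟨fun hℓ => ⟨hℓ.1, fun _ hx _ hy => re_mul_conj_pos_of_mem_dualComplexCone hsep hℓ hx hy⟩,
      fun hℓ => mem_dualComplexCone_of_re_mul_conj_pos hℓ.1 hℓ.2⟩

theorem hatDualComplexCone_subset : hatDualComplexCone S ⊆ dualComplexCone S := by
  rintro _ ⟨ℓ, hℓ, p, hp, ε₁, hε₁, ε₂, hε₂, rfl⟩
  refine mem_dualComplexCone_of_re_mul_conj_pos
    (isCLinearFunctional_mul_cext_add_mul_cext _ _ ℓ p) fun x hx y hy => ?_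
  have hsq : ∀ ε ∈ ({1, -1} : Set ℝ), ε * ε = 1 := by
    rintro ε (rfl | rfl) <;> norm_num
  have hre : ((ε₁ * cext ℓ (x, 0) + ε₂ * I * cext p (x, 0)) *
      conj (ε₁ * cext ℓ (y, 0) + ε₂ * I * cext p (y, 0))).re =
      ε₁ * ε₁ * (ℓ x * ℓ y) + ε₂ * ε₂ * (p x * p y) := by
    simp only [cext, map_zero, Complex.ofReal_zero, zero_mul, add_zero, map_add, map_mul,
      conj_ofReal, conj_I, mul_re, mul_im, add_re, add_im, ofReal_re, ofReal_im, I_re, I_im,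
      neg_re, neg_im]
    ring
  rw [hre, hsq _ hε₁, hsq _ hε₂]
  have := hℓ.2 x hx
  have := hℓ.2 y hy
  have := hp.2 x hx
  have := hp.2 y hy
  positivity

theorem cone_characterizations_general {B : Type*} [NormedAddCommGroup B] [NormedSpace ℝ B]
    (st : Setup B) :
    (complexCone st.S =
      {p : B × B | p ≠ 0 ∧ ∀ ℓ ∈ dualRealCone st.S, ∀ m ∈ dualRealCone st.S,
        0 ≤ (cext ℓ p * (starRingEnd ℂ) (cext m p)).re}) ∧
    (dualComplexCone st.S =
      {ℓ : B × B → ℂ | IsCLinearFunctional ℓ ∧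
        ∀ x ∈ realCone st.S, ∀ y ∈ realCone st.S,
          0 < (ℓ (x, 0) * (starRingEnd ℂ) (ℓ (y, 0))).re}) ∧
    hatDualComplexCone st.S ⊆ dualComplexCone st.S :=
  ⟨complexCone_eq, dualComplexCone_eq st.separating, hatDualComplexCone_subset⟩

/-- **Lemma 5.6 (characterizations of the complex cone and its dual).**
(a) `𝒞_ℂ = {h ≠ 0 : Re(ℓ(h) conj(m(h))) ≥ 0 for all ℓ, m ∈ 𝒞'_ℝ}`;
(b) `𝒞'_ℂ = {ℓ ∈ B'_ℂ : Re(ℓ(x) conj(ℓ(y))) > 0 for all x, y ∈ 𝒞_ℝ}`;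
(c) `𝒞'_ℂ ⊇ Ĉ'_ℂ`. -/
theorem cone_characterizations {B : Type*} [NormedAddCommGroup B] [NormedSpace ℝ B]
    [CompleteSpace B] (st : Setup B) :
    (complexCone st.S =
      {p : B × B | p ≠ 0 ∧ ∀ ℓ ∈ dualRealCone st.S, ∀ m ∈ dualRealCone st.S,
        0 ≤ (cext ℓ p * (starRingEnd ℂ) (cext m p)).re}) ∧
    (dualComplexCone st.S =
      {ℓ : B × B → ℂ | IsCLinearFunctional ℓ ∧
        ∀ x ∈ realCone st.S, ∀ y ∈ realCone st.S,
          0 < (ℓ (x, 0) * (starRingEnd ℂ) (ℓ (y, 0))).re}) ∧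
    hatDualComplexCone st.S ⊆ dualComplexCone st.S :=
  cone_characterizations_general st

end ConeSetup
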